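/- arXiv:2102.03261 — 3 statements merged into one kernel-verified Lean document; each statement's English description precedes it below -/
import Mathlib

section
/- Let β > 0, A a finite nonempty set, x : A → ℝ, i ∈ A, and ε ≥ 0. Define F(x) = β·log(∑_a exp(x_a/β)) and let x' be x with x'_i = x_i + ε. Then ε·softmax_i(x/β) ≤ F(x') - F(x) ≤ ε·softmax_i(x'/β), and both sides are nonnegative. -/
/-!
Log-sum-exp `L` is convex with gradient softmax, so its increment along the `i`-th coordinate
lies above the tangent line: `s * softmax_i y ≤ L (y + s eᵢ) - L y` for every real `s`.
This is the lower bound; the upper bound is the same inequality read from the perturbed point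
with `-s`. The tangent inequality itself is the convexity of `exp`: with `p = softmax_i y`,
the sum of exponentials gets multiplied by `1 - p + p eˢ ≥ exp (p s)`.
-/

open Real Finset Function

noncomputable def logSumExp {A : Type*} [Fintype A] (y : A → ℝ) : ℝ :=
  log (∑ a, exp (y a))

lemma exp_mul_le_one_sub_add_mul_exp {p : ℝ} (hp₀ : 0 ≤ p) (hp₁ : p ≤ 1) (s : ℝ) :
    exp (p * s) ≤ 1 - p + p * exp s := by
  have h := convexOn_exp.2 (Set.mem_univ s) (Set.mem_univ 0) hp₀ (sub_nonneg.2 hp₁) (by ring)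
  simpa [smul_eq_mul, exp_zero, add_comm] using h

section Update

variable {A : Type*} [Fintype A] [DecidableEq A] (y : A → ℝ) (i : A) (s : ℝ)

lemma sum_exp_update_add :
    ∑ a, exp (update y i (y i + s) a) = ∑ a, exp (y a) + exp (y i) * (exp s - 1) := by
  rw [← add_sum_erase _ _ (mem_univ i), ← add_sum_erase _ (fun a => exp (y a)) (mem_univ i),
    update_self, sum_congr rfl fun a ha => by rw [update_of_ne (ne_of_mem_erase ha)], exp_add]
  ring

lemma mul_softmax_le_logSumExp_update_sub :
    s * (exp (y i) / ∑ a, exp (y a)) ≤ logSumExp (update y i (y i + s)) - logSumExp y := by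
  rw [logSumExp, logSumExp, sum_exp_update_add]
  set S := ∑ a, exp (y a)
  set p := exp (y i) / S
  have hS : 0 < S := sum_pos (fun a _ => exp_pos _) ⟨i, mem_univ i⟩
  have hp₀ : 0 ≤ p := by positivity
  have hp₁ : p ≤ 1 :=
    (div_le_one hS).2 (single_le_sum (fun a _ => (exp_pos (y a)).le) (mem_univ i))
  have hfactor : S + exp (y i) * (exp s - 1) = S * (1 - p + p * exp s) := by
    simp only [p]; field_simp; ring
  have hfactor_pos : 0 < 1 - p + p * exp s :=
    (exp_pos _).trans_le (exp_mul_le_one_sub_add_mul_exp hp₀ hp₁ s)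
  rw [hfactor, log_mul hS.ne' hfactor_pos.ne', add_sub_cancel_left, mul_comm,
    le_log_iff_exp_le hfactor_pos]
  exact exp_mul_le_one_sub_add_mul_exp hp₀ hp₁ s

lemma logSumExp_update_sub_le_mul_softmax :
    logSumExp (update y i (y i + s)) - logSumExp y ≤
      s * (exp (update y i (y i + s) i) / ∑ a, exp (update y i (y i + s) a)) := by
  have h := mul_softmax_le_logSumExp_update_sub (update y i (y i + s)) i (-s)
  rw [update_self, update_idem, add_neg_cancel_right, update_eq_self] at h
  rw [update_self]
  linarith

end Update

theorem logsumexp_perturb_nonneg_general {A : Type*} [Fintype A] [DecidableEq A]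
    (β : ℝ) (hβ : 0 < β) (x : A → ℝ) (i : A) (ε : ℝ) (hε : 0 ≤ ε)
    (x' : A → ℝ) (hx' : x' = Function.update x i (x i + ε))
    (F : (A → ℝ) → ℝ) (hF : ∀ y, F y = β * Real.log (∑ a, Real.exp (y a / β)))
    (softmax : (A → ℝ) → A → ℝ)
    (hsm : ∀ y a, softmax y a = Real.exp (y a) / ∑ b, Real.exp (y b)) :
    ε * softmax (fun a => x a / β) i ≤ F x' - F x ∧
      F x' - F x ≤ ε * softmax (fun a => x' a / β) i ∧
      0 ≤ ε * softmax (fun a => x a / β) i := by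
  set y : A → ℝ := fun a => x a / β with hy
  set y' : A → ℝ := fun a => x' a / β with hy'
  have hy'_update : y' = update y i (y i + ε / β) := by
    ext a
    rcases eq_or_ne a i with rfl | ha
    · simp only [hy, hy', hx', update_self, add_div]
    · simp only [hy, hy', hx', update_of_ne ha]
  have hlower := mul_softmax_le_logSumExp_update_sub y i (ε / β)
  have hupper := logSumExp_update_sub_le_mul_softmax y i (ε / β)
  rw [← hy'_update] at hlower hupper
  have hΔ : F x' - F x = β * (logSumExp y' - logSumExp y) := by
    rw [hF, hF, logSumExp, logSumExp]; ring
  rw [hsm, hsm, hΔ]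
  refine ⟨?_, ?_, by positivity⟩
  · calc ε * (exp (y i) / ∑ b, exp (y b))
          = β * (ε / β * (exp (y i) / ∑ b, exp (y b))) := by field_simp
      _ ≤ β * (logSumExp y' - logSumExp y) := by gcongr
  · calc β * (logSumExp y' - logSumExp y)
          ≤ β * (ε / β * (exp (y' i) / ∑ b, exp (y' b))) := by gcongr
      _ = ε * (exp (y' i) / ∑ b, exp (y' b)) := by field_simp

theorem logsumexp_perturb_nonneg {A : Type*} [Fintype A] [Nonempty A] [DecidableEq A]
    (β : ℝ) (hβ : 0 < β) (x : A → ℝ) (i : A) (ε : ℝ) (hε : 0 ≤ ε)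
    (x' : A → ℝ) (hx' : x' = Function.update x i (x i + ε))
    (F : (A → ℝ) → ℝ) (hF : ∀ y, F y = β * Real.log (∑ a, Real.exp (y a / β)))
    (softmax : (A → ℝ) → A → ℝ)
    (hsm : ∀ y a, softmax y a = Real.exp (y a) / ∑ b, Real.exp (y b)) :
    ε * softmax (fun a => x a / β) i ≤ F x' - F x ∧
      F x' - F x ≤ ε * softmax (fun a => x' a / β) i ∧
      0 ≤ ε * softmax (fun a => x a / β) i :=
  logsumexp_perturb_nonneg_general β hβ x i ε hε x' hx' F hF softmax hsm
end

section
/- Let β > 0, A finite nonempty, Q_old : A → ℝ, a_k ∈ A, δ ∈ ℝ, and Q_new(a) = Q_old(a) + (if a = a_k then δ else 0). Define V(Q) = β·log(∑_a exp(Q(a)/β)) and π_Q(a) = exp(Q(a)/β)/∑_b exp(Q(b)/β). Then |V(Q_new) - V(Q_old)| ≤ max{π_{Q_old}(a_k), π_{Q_new}(a_k)}·|δ|. -/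
/-! The soft value `V(Q) = β log ∑ exp (Q a / β)` is convex in `Q` with gradient the softmax policy
`π_Q`, so the gradient inequality bounds `V(Q + δ eₖ) - V(Q)` below by `π_Q(k) δ`. Applied at
`Q_old` with step `δ` and at `Q_new` with step `-δ`, it traps `V(Q_new) - V(Q_old)` between
`π_{Q_old}(k) δ` and `π_{Q_new}(k) δ`. Concretely, the gradient inequality reduces to
`q t ≤ log (q eᵗ + 1 - q)` for `q ∈ [0, 1]`, which is convexity of `exp` between `0` and `t`. -/

open Finset

lemma abs_le_max_mul_abs {x δ p p' : ℝ} (hp : 0 ≤ p) (hp' : 0 ≤ p')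
    (hlower : p * δ ≤ x) (hupper : p' * (-δ) ≤ -x) : |x| ≤ max p p' * |δ| := by
  have hpM : p * |δ| ≤ max p p' * |δ| := by gcongr; exact le_max_left _ _
  have hp'M : p' * |δ| ≤ max p p' * |δ| := by gcongr; exact le_max_right _ _
  rw [abs_le]
  constructor
  · nlinarith [mul_le_mul_of_nonneg_left (neg_le_abs δ) hp]
  · nlinarith [mul_le_mul_of_nonneg_left (le_abs_self δ) hp']

open Real in
lemma mul_le_log_mul_exp_add_one_sub {q : ℝ} (hq₀ : 0 ≤ q) (hq₁ : q ≤ 1) (t : ℝ) :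
    q * t ≤ log (q * exp t + (1 - q)) := by
  have hconv : exp (q * t) ≤ q * exp t + (1 - q) := by
    simpa [smul_eq_mul] using
      convexOn_exp.2 (Set.mem_univ t) (Set.mem_univ 0) hq₀ (by linarith) (by ring)
  calc q * t = log (exp (q * t)) := (log_exp _).symm
    _ ≤ log (q * exp t + (1 - q)) := log_le_log (exp_pos _) hconv

namespace SoftQ

open Real

variable {A : Type*} [Fintype A]

noncomputable def partition (β : ℝ) (Q : A → ℝ) : ℝ := ∑ a, exp (Q a / β)

noncomputable def softValue (β : ℝ) (Q : A → ℝ) : ℝ := β * log (partition β Q)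

noncomputable def softmax (β : ℝ) (Q : A → ℝ) (a : A) : ℝ := exp (Q a / β) / partition β Q

lemma partition_pos [Nonempty A] (β : ℝ) (Q : A → ℝ) : 0 < partition β Q :=
  sum_pos (fun _ _ => exp_pos _) univ_nonempty

lemma softmax_pos [Nonempty A] (β : ℝ) (Q : A → ℝ) (a : A) : 0 < softmax β Q a :=
  div_pos (exp_pos _) (partition_pos β Q)

lemma softmax_le_one (β : ℝ) (Q : A → ℝ) (a : A) : softmax β Q a ≤ 1 :=
  div_le_one_of_le₀ (single_le_sum (f := fun b => exp (Q b / β)) (fun _ _ => (exp_pos _).le)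
    (mem_univ a)) (sum_nonneg fun _ _ => (exp_pos _).le)

variable [DecidableEq A]

lemma partition_add_single [Nonempty A] (β : ℝ) (Q : A → ℝ) (k : A) (δ : ℝ) :
    partition β (Q + (Pi.single k δ : A → ℝ)) =
      partition β Q * (softmax β Q k * exp (δ / β) + (1 - softmax β Q k)) := by
  have hterm : ∀ a, exp ((Q + (Pi.single k δ : A → ℝ)) a / β) =
      exp (Q a / β) + (Pi.single k (exp (Q k / β) * (exp (δ / β) - 1)) : A → ℝ) a := by
    intro a
    rcases eq_or_ne a k with rfl | hak
    · simp only [Pi.add_apply, Pi.single_eq_same, add_div, exp_add]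
      ring
    · simp [hak]
  have hZ := (partition_pos β Q).ne'
  simp only [partition, softmax] at hZ ⊢
  rw [sum_congr rfl fun a _ => hterm a, sum_add_distrib, sum_pi_single']
  simp only [mem_univ, if_true]
  field_simp
  ring

lemma softmax_mul_le_softValue_add_single_sub [Nonempty A] {β : ℝ} (hβ : 0 < β)
    (Q : A → ℝ) (k : A) (δ : ℝ) :
    softmax β Q k * δ ≤ softValue β (Q + (Pi.single k δ : A → ℝ)) - softValue β Q := by
  set q := softmax β Q k
  have hq := softmax_pos β Q k
  have hlog := mul_le_log_mul_exp_add_one_sub hq.le (softmax_le_one β Q k) (δ / β)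
  have hpos : 0 < q * exp (δ / β) + (1 - q) := by
    have := softmax_le_one β Q k
    positivity
  rw [softValue, softValue, partition_add_single, log_mul (partition_pos β Q).ne' hpos.ne']
  calc q * δ = β * (q * (δ / β)) := by field_simp
    _ ≤ β * log (q * exp (δ / β) + (1 - q)) := by gcongr
    _ = _ := by ring

end SoftQ

open SoftQ in
theorem soft_evb_upper_bound {A : Type*} [Fintype A] [Nonempty A] [DecidableEq A]
    (β : ℝ) (hβ : 0 < β) (Q_old : A → ℝ) (a_k : A) (δ : ℝ)
    (Q_new : A → ℝ) (hQ : ∀ a, Q_new a = Q_old a + (if a = a_k then δ else 0))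
    (V : (A → ℝ) → ℝ) (hV : ∀ Q, V Q = β * Real.log (∑ a, Real.exp (Q a / β)))
    (π : (A → ℝ) → A → ℝ)
    (hπ : ∀ Q a, π Q a = Real.exp (Q a / β) / ∑ b, Real.exp (Q b / β)) :
    |V Q_new - V Q_old| ≤ max (π Q_old a_k) (π Q_new a_k) * |δ| := by
  have hV' : V = softValue β := funext hV
  have hπ' : π = softmax β := funext₂ hπ
  have h_new : Q_new = Q_old + Pi.single a_k δ := funext fun a => by
    simp [hQ, Pi.single_apply]
  have h_old : Q_old = Q_new + Pi.single a_k (-δ) := by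
    rw [h_new, add_assoc, ← Pi.single_add, add_neg_cancel, Pi.single_zero, add_zero]
  subst hV' hπ'
  apply abs_le_max_mul_abs (softmax_pos β Q_old a_k).le (softmax_pos β Q_new a_k).le
  · simpa only [← h_new] using softmax_mul_le_softValue_add_single_sub hβ Q_old a_k δ
  · simpa only [← h_old, neg_sub] using softmax_mul_le_softValue_add_single_sub hβ Q_new a_k (-δ)
end

section
/- Let β > 0, A finite nonempty, Q_old : A → ℝ, a_k ∈ A, δ ∈ ℝ, and Q_new(a) = Q_old(a) + (if a = a_k then δ else 0). Define V(Q) = β·log(∑_a exp(Q(a)/β)) and π_Q(a) = exp(Q(a)/β)/∑_b exp(Q(b)/β). Then |V(Q_new) - V(Q_old)| ≥ min{π_{Q_old}(a_k), π_{Q_new}(a_k)}·|δ|. -/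
/-!
The soft value `V Q = β log ∑ exp (Q / β)` is convex in `Q` with gradient the Boltzmann policy
`π_Q` (Jensen's inequality for `exp` under the weights `π_Q`). Changing `Q` only at `a_k` by `δ`,
the tangent inequalities at the old and at the new `Q` give
`π_{Q_old}(a_k) δ ≤ V Q_new - V Q_old ≤ π_{Q_new}(a_k) δ`, and the bound follows according to the
sign of `δ`.
-/

open Finset

noncomputable section

open Real

variable {ι : Type*} [Fintype ι]

def softValue (β : ℝ) (Q : ι → ℝ) : ℝ := β * log (∑ a, exp (Q a / β))

def softmax (β : ℝ) (Q : ι → ℝ) (a : ι) : ℝ := exp (Q a / β) / ∑ b, exp (Q b / β)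

lemma sum_exp_div_pos [Nonempty ι] (β : ℝ) (Q : ι → ℝ) : 0 < ∑ b, exp (Q b / β) :=
  sum_pos (fun _ _ ↦ exp_pos _) univ_nonempty

lemma softmax_nonneg (β : ℝ) (Q : ι → ℝ) (a : ι) : 0 ≤ softmax β Q a :=
  div_nonneg (exp_pos _).le (sum_nonneg fun _ _ ↦ (exp_pos _).le)

lemma sum_softmax [Nonempty ι] (β : ℝ) (Q : ι → ℝ) : ∑ a, softmax β Q a = 1 := by
  simp only [softmax, ← sum_div]
  exact div_self (sum_exp_div_pos β Q).ne'

lemma softmax_mul_exp_sub (β : ℝ) (Q Q' : ι → ℝ) (a : ι) :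
    softmax β Q a * exp ((Q' a - Q a) / β) = exp (Q' a / β) / ∑ b, exp (Q b / β) := by
  rw [softmax, sub_div, exp_sub]
  field_simp

/-- The tangent inequality for the convex function `softValue β`, whose gradient is `softmax β`. -/
theorem sum_softmax_mul_sub_le_softValue_sub [Nonempty ι] {β : ℝ} (hβ : 0 < β) (Q Q' : ι → ℝ) :
    ∑ a, softmax β Q a * (Q' a - Q a) ≤ softValue β Q' - softValue β Q := by
  have jensen : exp (∑ a, softmax β Q a • ((Q' a - Q a) / β)) ≤
      ∑ a, softmax β Q a • exp ((Q' a - Q a) / β) :=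
    convexOn_exp.map_sum_le (fun a _ ↦ softmax_nonneg β Q a) (sum_softmax β Q)
      (fun _ _ ↦ Set.mem_univ _)
  simp only [smul_eq_mul, softmax_mul_exp_sub, ← sum_div, ← mul_div_assoc] at jensen
  rw [← le_log_iff_exp_le (div_pos (sum_exp_div_pos β Q') (sum_exp_div_pos β Q)),
    log_div (sum_exp_div_pos β Q').ne' (sum_exp_div_pos β Q).ne', div_le_iff₀ hβ] at jensen
  rw [softValue, softValue]
  linarith

theorem softmax_mul_sub_le_softValue_sub {β : ℝ} (hβ : 0 < β) {Q Q' : ι → ℝ} {a : ι}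
    (hQ' : ∀ b ≠ a, Q' b = Q b) :
    softmax β Q a * (Q' a - Q a) ≤ softValue β Q' - softValue β Q := by
  have : Nonempty ι := ⟨a⟩
  have h := sum_softmax_mul_sub_le_softValue_sub hβ Q Q'
  rwa [sum_eq_single a (fun b _ hb ↦ by rw [hQ' b hb, sub_self, mul_zero])
    (fun h ↦ absurd (mem_univ a) h)] at h

end

lemma min_mul_abs_le_abs {p q δ x : ℝ} (hpx : p * δ ≤ x)
    (hxq : x ≤ q * δ) : min p q * |δ| ≤ |x| := by
  rcases le_total 0 δ with hδ | hδ
  · rw [abs_of_nonneg hδ]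
    calc min p q * δ ≤ p * δ := mul_le_mul_of_nonneg_right (min_le_left p q) hδ
      _ ≤ x := hpx
      _ ≤ |x| := le_abs_self x
  · rw [abs_of_nonpos hδ]
    calc min p q * -δ ≤ q * -δ := mul_le_mul_of_nonneg_right (min_le_right p q) (neg_nonneg.2 hδ)
      _ ≤ -x := by linarith
      _ ≤ |x| := neg_le_abs x

theorem soft_evb_lower_bound_general {A : Type*} [Fintype A] [DecidableEq A]
    (β : ℝ) (hβ : 0 < β) (Q_old : A → ℝ) (a_k : A) (δ : ℝ)
    (Q_new : A → ℝ) (hQ : ∀ a, Q_new a = Q_old a + (if a = a_k then δ else 0))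
    (V : (A → ℝ) → ℝ) (hV : ∀ Q, V Q = β * Real.log (∑ a, Real.exp (Q a / β)))
    (π : (A → ℝ) → A → ℝ)
    (hπ : ∀ Q a, π Q a = Real.exp (Q a / β) / ∑ b, Real.exp (Q b / β)) :
    min (π Q_old a_k) (π Q_new a_k) * |δ| ≤ |V Q_new - V Q_old| := by
  obtain rfl : V = softValue β := funext hV
  obtain rfl : π = softmax β := funext₂ hπ
  have hδ : Q_new a_k - Q_old a_k = δ := by simp [hQ]
  have h_new : ∀ b ≠ a_k, Q_new b = Q_old b := fun b hb ↦ by simp [hQ, hb]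
  have lower := softmax_mul_sub_le_softValue_sub hβ h_new
  have upper := softmax_mul_sub_le_softValue_sub hβ fun b hb ↦ (h_new b hb).symm
  rw [hδ] at lower
  rw [← neg_sub, hδ] at upper
  exact min_mul_abs_le_abs lower (by linarith)

theorem soft_evb_lower_bound {A : Type*} [Fintype A] [Nonempty A] [DecidableEq A]
    (β : ℝ) (hβ : 0 < β) (Q_old : A → ℝ) (a_k : A) (δ : ℝ)
    (Q_new : A → ℝ) (hQ : ∀ a, Q_new a = Q_old a + (if a = a_k then δ else 0))
    (V : (A → ℝ) → ℝ) (hV : ∀ Q, V Q = β * Real.log (∑ a, Real.exp (Q a / β)))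
    (π : (A → ℝ) → A → ℝ)
    (hπ : ∀ Q a, π Q a = Real.exp (Q a / β) / ∑ b, Real.exp (Q b / β)) :
    min (π Q_old a_k) (π Q_new a_k) * |δ| ≤ |V Q_new - V Q_old| :=
  soft_evb_lower_bound_general β hβ Q_old a_k δ Q_new hQ V hV π hπ
end
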